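/- arXiv:0901.0841 — 8 statements merged into one kernel-verified Lean document; each statement's English description precedes it below -/
import Mathlib

section
/- Let L be an integer and M a positive integer. Then the M×M matrix with (p,N)-entry equal to the binomial coefficient C(L+p-N, p-1) (for 1 ≤ p, N ≤ M) has nonzero determinant, i.e., it is invertible. -/
open Polynomial Matrix

lemma key_eval (L : ℤ) (p : ℕ) (a : ℤ) :
    ((ascPochhammer ℚ p).comp (X - C ((L : ℚ) + p))).eval (a : ℚ) =
      (-1) ^ p * (p.factorial : ℚ) * ((Ring.choose (L + p - a) p : ℤ) : ℚ) := by
  have h1 : ((ascPochhammer ℚ p).comp (X - C ((L : ℚ) + p))).eval (a : ℚ)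
      = (ascPochhammer ℚ p).eval (-(((L + p - a : ℤ) : ℚ))) := by
    rw [eval_comp, eval_sub, eval_X, eval_C]
    congr 1
    push_cast
    ring
  rw [h1, ascPochhammer_eval_neg_eq_descPochhammer]
  have h2 : (descPochhammer ℚ p).eval (((L + p - a : ℤ) : ℚ))
      = (((descPochhammer ℤ p).eval (L + p - a) : ℤ) : ℚ) := by
    rw [descPochhammer_eval_cast]
  rw [h2, Polynomial.eval_eq_smeval, Ring.descPochhammer_eq_factorial_smul_choose]
  push_cast [nsmul_eq_mul]
  ring

/-- For every integer `L` and positive integer `M`, the `M × M` matrix whose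
`(p, N)` entry (for `1 ≤ p, N ≤ M`) is the generalized binomial coefficient
`C(L + p - N, p - 1)` has nonzero determinant.  Using `0`-based indices `p N : Fin M`,
the entry is `Ring.choose (L + p - N) p`, where `Ring.choose a k` is the generalized
binomial coefficient `a(a-1)⋯(a-k+1)/k!` for `a : ℤ`, `k : ℕ`. -/
theorem stmt_0 (L : ℤ) (M : ℕ) (hM : 0 < M) :
    (Matrix.of fun p N : Fin M => Ring.choose (L + (p : ℤ) - (N : ℤ)) (p : ℕ)).det ≠ 0 := by
  set A : Matrix (Fin M) (Fin M) ℤ :=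
    Matrix.of fun p N : Fin M => Ring.choose (L + (p : ℤ) - (N : ℤ)) (p : ℕ) with hAdef
  have hcast : (((A.det : ℤ) : ℚ)) ≠ 0 → A.det ≠ 0 := by
    intro h h'
    rw [h'] at h
    simp at h
  apply hcast
  have hmapdet : ((A.det : ℤ) : ℚ) = ((Int.castRingHom ℚ).mapMatrix A).det := by
    rw [← RingHom.map_det]; simp
  rw [hmapdet]
  set B : Matrix (Fin M) (Fin M) ℚ := (Int.castRingHom ℚ).mapMatrix A with hBdef
  set q : Fin M → ℚ[X] := fun p =>
    (ascPochhammer ℚ (p : ℕ)).comp (X - C ((L : ℚ) + (p : ℕ))) with hq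
  have hmonic : ∀ p : Fin M, (q p).Monic := fun p =>
    (monic_ascPochhammer ℚ (p : ℕ)).comp_X_sub_C _
  have hdeg : ∀ p : Fin M, (q p).natDegree = (p : ℕ) := by
    intro p
    rw [hq]
    simp only [natDegree_comp, ascPochhammer_natDegree, natDegree_X_sub_C, mul_one]
  set v : Fin M → ℚ := fun N => (N : ℚ) with hv
  have hvdm := Matrix.det_eval_matrixOfPolynomials_eq_det_vandermonde v q hdeg hmonic
  have hE : (Matrix.of fun N p : Fin M => (q p).eval (v N))
      = (Matrix.diagonal (fun p : Fin M => (-1 : ℚ) ^ (p : ℕ) * (p : ℕ).factorial) * B)ᵀ := by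
    ext N p
    have := key_eval L (p : ℕ) (N : ℤ)
    simp only [Matrix.of_apply, Matrix.transpose_apply, Matrix.diagonal_mul, hv]
    rw [hq]
    simp only [hBdef, RingHom.mapMatrix_apply, Matrix.map_apply, Int.coe_castRingHom, hAdef,
      Matrix.of_apply]
    push_cast at this ⊢
    rw [this]
  have hvand : (Matrix.vandermonde v).det ≠ 0 := by
    rw [Matrix.det_vandermonde_ne_zero_iff]
    intro i j hij
    simp only [hv] at hij
    have : (i : ℕ) = (j : ℕ) := by exact_mod_cast hij
    exact Fin.ext this
  rw [hvdm, hE, Matrix.det_transpose, Matrix.det_mul, Matrix.det_diagonal] at hvand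
  intro h
  rw [h, mul_zero] at hvand
  exact hvand rfl
end

section
/- In the algebra U(ĥ)/⟨c−1⟩, for 1 ≤ i ≤ d and positive integers m ≤ n, the commutator [v^{ii}(m,n), v^{ii}(−n,−m)] equals n(1+δ_{m,n}) v^{ii}(−m,m) + m(1+δ_{m,n}) v^{ii}(−n,n) + mn(1+δ_{m,n}). -/
set_option maxRecDepth 4000

/-- The defining relations of `U(ĥ)/⟨c−1⟩`: it is the quotient of the free associative
`ℂ`-algebra on the generators `v^i(m)` (indexed by `(i, m) : Fin d × ℤ`) by the Heisenberg
relations `v^i(m) v^j(n) = v^j(n) v^i(m) + δ_{m+n,0} δ_{i,j} m` (the central element `c`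
having been specialized to `1`). -/
inductive HeisRel (d : ℕ) : FreeAlgebra ℂ (Fin d × ℤ) → FreeAlgebra ℂ (Fin d × ℤ) → Prop
  | rel (i j : Fin d) (m n : ℤ) :
      HeisRel d (FreeAlgebra.ι ℂ (i, m) * FreeAlgebra.ι ℂ (j, n))
        (FreeAlgebra.ι ℂ (j, n) * FreeAlgebra.ι ℂ (i, m)
          + (if i = j ∧ m + n = 0 then (m : ℂ) else 0) • 1)

/-- The algebra `U(ĥ)/⟨c−1⟩`. -/
abbrev HeisU (d : ℕ) : Type := RingQuot (HeisRel d)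

/-- `v^{ij}(m,n)`, the image of `v^i(m) v^j(n)` in `U(ĥ)/⟨c−1⟩`. -/
noncomputable def vv {d : ℕ} (i j : Fin d) (m n : ℤ) : HeisU d :=
  RingQuot.mkRingHom (HeisRel d) (FreeAlgebra.ι ℂ (i, m)) *
    RingQuot.mkRingHom (HeisRel d) (FreeAlgebra.ι ℂ (j, n))

/-- Auxiliary: the image of the single generator `v^i(k)` in `U(ĥ)/⟨c−1⟩`. -/
noncomputable def gen {d : ℕ} (i : Fin d) (k : ℤ) : HeisU d :=
  RingQuot.mkRingHom (HeisRel d) (FreeAlgebra.ι ℂ (i, k))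

lemma vv_eq {d : ℕ} (i j : Fin d) (m n : ℤ) : vv i j m n = gen i m * gen j n := rfl

lemma gen_swap {d : ℕ} (i : Fin d) (k l : ℤ) :
    gen i k * gen i l = gen i l * gen i k + (if k + l = 0 then (k : ℂ) else 0) • 1 := by
  have h := RingQuot.mkAlgHom_rel ℂ (HeisRel.rel (d := d) i i k l)
  rw [map_add, map_mul, map_mul, map_smul, map_one] at h
  simp only [gen, ← RingQuot.mkAlgHom_coe ℂ (HeisRel d), RingHom.coe_coe, true_and] at h ⊢
  exact h

lemma gen_swap' {d : ℕ} (i : Fin d) (k l : ℤ) (x : HeisU d) :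
    gen i k * (gen i l * x) = gen i l * (gen i k * x) + (if k + l = 0 then (k : ℂ) else 0) • x := by
  rw [← mul_assoc, gen_swap, add_mul, mul_assoc, smul_mul_assoc, one_mul]

/-- in `U(ĥ)/⟨c−1⟩`, for `1 ≤ i ≤ d` and positive integers `m ≤ n`, the
commutator `[v^{ii}(m,n), v^{ii}(−n,−m)]` equals
`n(1+δ_{m,n}) v^{ii}(−m,m) + m(1+δ_{m,n}) v^{ii}(−n,n) + mn(1+δ_{m,n})`. -/
theorem stmt_4 (d : ℕ) (i : Fin d) (m n : ℤ) (hm : 0 < m) (hmn : m ≤ n) :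
    vv i i m n * vv i i (-n) (-m) - vv i i (-n) (-m) * vv i i m n
      = ((n : ℂ) * (1 + if m = n then 1 else 0)) • vv i i (-m) m
        + ((m : ℂ) * (1 + if m = n then 1 else 0)) • vv i i (-n) n
        + ((m : ℂ) * (n : ℂ) * (1 + if m = n then 1 else 0)) • (1 : HeisU d) := by
  have hn : 0 < n := lt_of_lt_of_le hm hmn
  simp only [vv_eq]
  rcases eq_or_ne m n with rfl | hne
  · simp only [if_pos rfl]
    have h1 : ∀ x : HeisU d, gen i m * (gen i (-m) * x) = gen i (-m) * (gen i m * x) + (m : ℂ) • x := by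
      intro x; simpa using gen_swap' i m (-m) x
    have h2 : gen i m * gen i (-m) = gen i (-m) * gen i m + (m : ℂ) • 1 := by
      simpa using gen_swap i m (-m)
    have hmm : gen i m * gen i m * (gen i (-m) * gen i (-m))
        = gen i (-m) * gen i (-m) * (gen i m * gen i m)
          + (4 * m : ℂ) • (gen i (-m) * gen i m) + (2 * m * m : ℂ) • 1 := by
      simp only [mul_assoc, h1, h2, mul_add, add_mul, mul_smul_comm, smul_mul_assoc,
        smul_add, smul_smul, mul_one]
      module
    rw [hmm]
    simp only [if_true]
    module
  · have hswap : ∀ k l : ℤ, k + l ≠ 0 → gen i k * gen i l = gen i l * gen i k := by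
      intro k l h; simpa [h] using gen_swap i k l
    have hswap' : ∀ (k l : ℤ), k + l ≠ 0 → ∀ x : HeisU d,
        gen i k * (gen i l * x) = gen i l * (gen i k * x) := by
      intro k l h x; simpa [h] using gen_swap' i k l x
    have hac : ∀ x : HeisU d, gen i m * (gen i (-n) * x) = gen i (-n) * (gen i m * x) :=
      hswap' m (-n) (by omega)
    have hbc : ∀ x : HeisU d, gen i n * (gen i (-n) * x)
        = gen i (-n) * (gen i n * x) + (n : ℂ) • x := by
      intro x; simpa using gen_swap' i n (-n) x
    have had : ∀ x : HeisU d, gen i m * (gen i (-m) * x)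
        = gen i (-m) * (gen i m * x) + (m : ℂ) • x := by
      intro x; simpa using gen_swap' i m (-m) x
    have hbd : gen i n * gen i (-m) = gen i (-m) * gen i n := hswap n (-m) (by omega)
    have had2 : gen i m * gen i (-m) = gen i (-m) * gen i m + (m : ℂ) • 1 := by
      simpa using gen_swap i m (-m)
    have key : gen i m * gen i n * (gen i (-n) * gen i (-m))
        = gen i (-n) * gen i (-m) * (gen i m * gen i n)
          + (n : ℂ) • (gen i (-m) * gen i m) + (m : ℂ) • (gen i (-n) * gen i n)
          + (m * n : ℂ) • 1 := by
      simp only [mul_assoc, hbc, hac, had, hbd, had2, mul_add, add_mul, mul_smul_comm,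
        smul_mul_assoc, smul_add, smul_smul, mul_one]
      module
    rw [key]
    simp only [if_neg hne]
    module
end

section
/- In the Lie algebra L_r, for positive integers s ≠ t and positive integer m, one has [v(m,m), v(−s,−t)]_r = 2m(δ_{m,s} v(−t,m) + δ_{m,t} v(−s,m)), where v(a,b) := v^{11}(a,b). -/
/-- The underlying vector space of the Lie algebra `L_r`: formal `ℂ`-linear combinations
of quadratic symbols `v^{ij}(m,n)` (indexed by `(i, j, m, n)`; only the "normally ordered"
indices with `i < j`, or `i = j` and `m ≤ n`, are used, forming the basis `𝓑`), together
with a scalar component recording the summand `ℂ` of `L = Span 𝓑 ⊕ ℂ`. -/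
abbrev LSp (d : ℕ) : Type := ((Fin d × Fin d × ℤ × ℤ) →₀ ℂ) × ℂ

/-- The contraction scalar `[v^j(n), v^l(t)] = δ_{j,l} δ_{n+t,0} n` of the Heisenberg
algebra (with `c = 1`). -/
def kapC {d : ℕ} (j l : Fin d) (n t : ℤ) : ℂ :=
  if j = l ∧ n + t = 0 then (n : ℂ) else 0

/-- The element `v^{ij}(m,n)` of `L`, written in terms of the basis `𝓑 ∪ {1}`: one has
`v^{ij}(m,n) = v^{ji}(n,m)` unless `i = j` and `m = −n`, and
`v^{ii}(m,−m) = v^{ii}(−m,m) + m`. -/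
noncomputable def nrm {d : ℕ} (i j : Fin d) (m n : ℤ) : LSp d :=
  if i = j ∧ n < m then (Finsupp.single (i, j, n, m) 1, if m + n = 0 then (m : ℂ) else 0)
  else if j < i then (Finsupp.single (j, i, n, m) 1, 0)
  else (Finsupp.single (i, j, m, n) 1, 0)

/-- The `r`-modified bracket `[·,·]_r = π₁([·,·]) + r·π₂([·,·])` on basis elements of `𝓑`:
the commutator `[v^{ij}(m,n), v^{kl}(s,t)]` in `U(ĥ)/⟨c−1⟩` is computed by the Wick
formula `[ab,cd] = [b,d]ac + [b,c]ad + [a,d]cb + [a,c]db`, and then the scalar (`π₂`)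
component is multiplied by `r`. -/
noncomputable def wick {d : ℕ} (r : ℂ) (a b : Fin d × Fin d × ℤ × ℤ) : LSp d :=
  match a, b with
  | (i, j, m, n), (k, l, s, t) =>
    let u : LSp d := kapC j l n t • nrm i k m s + kapC j k n s • nrm i l m t
      + kapC i l m t • nrm k j s n + kapC i k m s • nrm l j t n
    (u.1, r * u.2)

/-- The bilinear extension of the `r`-modified bracket `[·,·]_r` to `L_r`
(the scalar summand `ℂ ⊆ L_r` is central). -/
noncomputable def brk {d : ℕ} (r : ℂ) (x y : LSp d) : LSp d :=
  x.1.sum fun a ca => y.1.sum fun b cb => (ca * cb) • wick r a b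

/-- in the Lie algebra `L_r`, for positive integers `s ≠ t` and a positive
integer `m`, one has `[v(m,m), v(−s,−t)]_r = 2m(δ_{m,s} v(−t,m) + δ_{m,t} v(−s,m))`,
where `v(a,b) := v^{11}(a,b)`. -/
theorem stmt_8 (d : ℕ) (hd : 2 ≤ d) (r : ℂ) (s t m : ℤ)
    (hs : 0 < s) (ht : 0 < t) (hst : s ≠ t) (hm : 0 < m) :
    brk r (nrm (⟨0, by omega⟩ : Fin d) ⟨0, by omega⟩ m m)
        (nrm (⟨0, by omega⟩ : Fin d) ⟨0, by omega⟩ (-s) (-t))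
      = (2 * (m : ℂ) * (if m = s then 1 else 0)) •
          nrm (⟨0, by omega⟩ : Fin d) ⟨0, by omega⟩ (-t) m
        + (2 * (m : ℂ) * (if m = t then 1 else 0)) •
          nrm (⟨0, by omega⟩ : Fin d) ⟨0, by omega⟩ (-s) m := by
  set z : Fin d := ⟨0, by omega⟩ with hz
  simp only [nrm, lt_self_iff_false, and_false, if_false, and_true, if_pos rfl]
  simp only [true_and]
  rw [if_neg (show ¬ m < -t by omega), if_neg (show ¬ m < -s by omega)]
  rcases lt_or_gt_of_ne hst with h | h
  · rw [if_pos (show -t < -s by omega), if_neg (show ¬ (-s + -t = 0) by omega)]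
    simp only [brk]
    rw [Finsupp.sum_single_index (by simp), Finsupp.sum_single_index (by simp), one_mul, one_smul]
    simp only [wick, kapC, nrm, true_and, lt_self_iff_false, if_false, eq_self_iff_true, if_pos rfl]
    rw [if_pos (show -t < m by omega), if_pos (show -s < m by omega),
        if_neg (show ¬ m < -t by omega), if_neg (show ¬ m < -s by omega)]
    rcases eq_or_ne m s with rfl | hms
    · simp only [add_neg_cancel, if_pos rfl, if_neg (show ¬ (m + -t = 0) by omega),
        if_neg (show m ≠ t from by omega), if_pos (rfl : m = m)]
      simp only [Prod.smul_mk, Prod.mk_add_mk, smul_zero, zero_smul, add_zero, zero_add,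
        Finsupp.smul_single', mul_one, mul_zero, Prod.mk.injEq, ← Finsupp.single_add,
        if_true, ite_true, and_true]
      congr 1
      ring
    · rcases eq_or_ne m t with rfl | hmt
      · simp only [add_neg_cancel, if_pos rfl, if_neg (show ¬ (m + -s = 0) by omega),
          if_neg hms, if_pos (rfl : m = m)]
        simp only [Prod.smul_mk, Prod.mk_add_mk, smul_zero, zero_smul, add_zero, zero_add,
          Finsupp.smul_single', mul_one, mul_zero, Prod.mk.injEq, ← Finsupp.single_add,
          if_true, ite_true, and_true]
        congr 1
        ring
      · simp only [if_neg (show ¬ (m + -s = 0) by omega), if_neg (show ¬ (m + -t = 0) by omega),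
          if_neg hms, if_neg hmt]
        refine Prod.ext ?_ ?_ <;> simp
  · rw [if_neg (show ¬ (-t < -s) by omega)]
    simp only [brk]
    rw [Finsupp.sum_single_index (by simp), Finsupp.sum_single_index (by simp), one_mul, one_smul]
    simp only [wick, kapC, nrm, true_and, lt_self_iff_false, if_false, eq_self_iff_true, if_pos rfl]
    rw [if_pos (show -s < m by omega), if_pos (show -t < m by omega),
        if_neg (show ¬ m < -s by omega), if_neg (show ¬ m < -t by omega)]
    rcases eq_or_ne m s with rfl | hms
    · simp only [add_neg_cancel, if_pos rfl, if_neg (show ¬ (m + -t = 0) by omega),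
        if_neg (show m ≠ t from by omega), if_pos (rfl : m = m)]
      simp only [Prod.smul_mk, Prod.mk_add_mk, smul_zero, zero_smul, add_zero, zero_add,
        Finsupp.smul_single', mul_one, mul_zero, Prod.mk.injEq, ← Finsupp.single_add,
        if_true, ite_true, and_true]
      congr 1
      ring
    · rcases eq_or_ne m t with rfl | hmt
      · simp only [add_neg_cancel, if_pos rfl, if_neg (show ¬ (m + -s = 0) by omega),
          if_neg hms, if_pos (rfl : m = m)]
        simp only [Prod.smul_mk, Prod.mk_add_mk, smul_zero, zero_smul, add_zero, zero_add,
          Finsupp.smul_single', mul_one, mul_zero, Prod.mk.injEq, ← Finsupp.single_add,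
          if_true, ite_true, and_true]
        congr 1
        ring
      · simp only [if_neg (show ¬ (m + -s = 0) by omega), if_neg (show ¬ (m + -t = 0) by omega),
          if_neg hms, if_neg hmt]
        refine Prod.ext ?_ ?_ <;> simp
end

section
/- Let M_r be the induced L_r-module U(L_r) ⊗_{U(L_r^+)} ℂ1, where L_r^+ is spanned by the v^{ij}(m,n) with m ≥ 0 or n ≥ 0 together with ℂ, annihilating (resp. acting by scalars on) the vacuum 1. Then for every positive integer m and nonnegative integer ν, in M_r one has v(m,m)·v(−m,−m)^ν·1 = 2m²ν(r + 2ν − 2)·v(−m,−m)^{ν−1}·1, where v(a,b) = v^{11}(a,b). -/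
/-- The scalar `σ(i,k,m,s)` such that `v^{ik}(m,s) = (normally ordered part) + σ(i,k,m,s)`:
it equals `m` when `i = k`, `s = −m` and `m > 0`, and `0` otherwise. -/
def sigC {d : ℕ} (i k : Fin d) (m s : ℤ) : ℂ :=
  if i = k ∧ m + s = 0 ∧ 0 < m then (m : ℂ) else 0

/-- A representation of (the universal enveloping algebra of) the Lie algebra `L_r` in an
associative `ℂ`-algebra `A`: a family of elements `ρ i j m n` playing the role of the
quadratic elements `v^{ij}(m,n)`, subject to the symmetry relations
`v^{ij}(m,n) = v^{ji}(n,m)` (for `i ≠ j` or `m ≠ −n`), `v^{ii}(m,−m) = v^{ii}(−m,m) + m`,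
and the commutation relations of `L_r`:
`[v^{ij}(m,n), v^{kl}(s,t)]_r = [b,d] v^{ik}(m,s) + [b,c] v^{il}(m,t) + [a,d] v^{kj}(s,n)
+ [a,c] v^{lj}(t,n) + (r−1)·(scalar part)`, i.e. the plain Wick-formula commutator of
`U(ĥ)/⟨c−1⟩` with its central (`π₂`) component multiplied by `r`. -/
structure LrAlg (d : ℕ) (r : ℂ) (A : Type*) [Ring A] [Algebra ℂ A] where
  ρ : Fin d → Fin d → ℤ → ℤ → A
  symm : ∀ (i j : Fin d) (m n : ℤ), i ≠ j ∨ m ≠ -n → ρ i j m n = ρ j i n m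
  symm' : ∀ (i : Fin d) (m : ℤ), ρ i i m (-m) = ρ i i (-m) m + algebraMap ℂ A (m : ℂ)
  comm : ∀ (i j k l : Fin d) (m n s t : ℤ),
    ρ i j m n * ρ k l s t - ρ k l s t * ρ i j m n
      = kapC j l n t • ρ i k m s + kapC j k n s • ρ i l m t
        + kapC i l m t • ρ k j s n + kapC i k m s • ρ l j t n
        + algebraMap ℂ A ((r - 1) *
            (kapC j l n t * sigC i k m s + kapC j k n s * sigC i l m t
              + kapC i l m t * sigC k j s n + kapC i k m s * sigC l j t n))

/-!
Write `A = v(m,m)`, `B = v(−m,−m)` and `H = v(−m,m)`. In `L_r` one has `[H, B] = 2m·B` and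
`[A, B] = 4m·H + 2rm²`, so `H` acts on `Bᵏ·1` by `2mk`, and commuting `A` past the `ν` factors
of `B^ν·1` (it kills the vacuum) leaves `(∑_{k<ν} (4m·2mk + 2rm²))·B^(ν−1)·1`, and the sum is
`2m²ν(r + 2ν − 2)`.
-/

section Commutator

variable {R M : Type*} [CommRing R] [AddCommGroup M] [Module R M]

theorem apply_apply_eq_of_mul_sub_mul_eq {X Y Z : Module.End R M} (h : X * Y - Y * X = Z)
    (w : M) : X (Y w) = Y (X w) + Z w := by
  rw [← h]
  simp

theorem apply_pow_apply_of_mul_sub_mul_eq_smul {H B : Module.End R M} {c : R} {v : M}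
    (hHB : H * B - B * H = c • B) (hv : H v = 0) (k : ℕ) :
    H ((B ^ k) v) = (k * c) • (B ^ k) v := by
  induction k with
  | zero => simp [hv]
  | succ k ih =>
    rw [pow_succ', Module.End.mul_apply, apply_apply_eq_of_mul_sub_mul_eq hHB, ih, map_smul,
      LinearMap.smul_apply, ← add_smul]
    push_cast
    ring_nf

theorem apply_pow_succ_apply_of_mul_sub_mul_eq {A B H : Module.End R M} {a b c : R} {v : M}
    (hAB : A * B - B * A = a • H + algebraMap R (Module.End R M) b)
    (hHB : H * B - B * H = c • B) (hHv : H v = 0) (hAv : A v = 0) (n : ℕ) :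
    A ((B ^ (n + 1)) v) = ((n + 1) * b + (n + 1).choose 2 * a * c) • (B ^ n) v := by
  induction n with
  | zero => simp [apply_apply_eq_of_mul_sub_mul_eq hAB, hHv, hAv]
  | succ n ih =>
    rw [pow_succ', Module.End.mul_apply, apply_apply_eq_of_mul_sub_mul_eq hAB, ih, map_smul,
      LinearMap.add_apply, LinearMap.smul_apply, Module.algebraMap_end_apply,
      apply_pow_apply_of_mul_sub_mul_eq_smul hHB hHv, smul_smul, ← Module.End.mul_apply,
      ← pow_succ', ← add_smul, ← add_smul, Nat.choose_succ_succ' (n + 1), Nat.choose_one_right]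
    push_cast
    ring_nf

end Commutator

theorem kapC_self_neg {d : ℕ} (i : Fin d) (m : ℤ) : kapC i i m (-m) = m :=
  if_pos ⟨rfl, add_neg_cancel m⟩

namespace LrAlg

variable {d : ℕ} {r : ℂ} {A : Type*} [Ring A] [Algebra ℂ A] (S : LrAlg d r A) (i : Fin d)

theorem comm_neg_pos_neg_neg {m : ℤ} (hm : m ≠ 0) :
    S.ρ i i (-m) m * S.ρ i i (-m) (-m) - S.ρ i i (-m) (-m) * S.ρ i i (-m) m
      = (2 * m : ℂ) • S.ρ i i (-m) (-m) := by
  have hk : kapC i i (-m) (-m) = 0 := if_neg fun h => hm (by omega)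
  have hs : sigC i i (-m) (-m) = 0 := if_neg fun h => hm (by omega)
  rw [S.comm, kapC_self_neg, hk, hs]
  simp only [Algebra.algebraMap_eq_smul_one]
  module

theorem comm_pos_pos_neg_neg {m : ℤ} (hm : 0 < m) :
    S.ρ i i m m * S.ρ i i (-m) (-m) - S.ρ i i (-m) (-m) * S.ρ i i m m
      = (4 * m : ℂ) • S.ρ i i (-m) m + algebraMap ℂ A (2 * r * m ^ 2) := by
  have hs : sigC i i m (-m) = m := if_pos ⟨rfl, add_neg_cancel m, hm⟩
  have hs' : sigC i i (-m) m = 0 := if_neg fun h => by omega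
  rw [S.comm, kapC_self_neg, hs, hs', S.symm' i m]
  simp only [Algebra.algebraMap_eq_smul_one]
  module

end LrAlg

/-- in the induced `L_r`-module `M_r` (here: any representation of `L_r` by
endomorphisms of a `ℂ`-vector space with a vacuum vector `one` annihilated by all
`v^{ij}(m,n)` with `m ≥ 0` or `n ≥ 0`), for every positive integer `m` and nonnegative
integer `ν` one has `v(m,m)·v(−m,−m)^ν·1 = 2m²ν(r + 2ν − 2)·v(−m,−m)^{ν−1}·1`, where
`v(a,b) = v^{11}(a,b)`. -/
theorem stmt_9 (d : ℕ) (hd : 2 ≤ d) (r : ℂ) (M : Type*) [AddCommGroup M] [Module ℂ M]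
    (S : LrAlg d r (Module.End ℂ M)) (one : M)
    (hvac : ∀ (i j : Fin d) (m n : ℤ), 0 ≤ m ∨ 0 ≤ n → S.ρ i j m n one = 0)
    (m : ℤ) (hm : 0 < m) (ν : ℕ) :
    S.ρ ⟨0, by omega⟩ ⟨0, by omega⟩ m m
        ((S.ρ ⟨0, by omega⟩ ⟨0, by omega⟩ (-m) (-m) ^ ν) one)
      = (2 * (m : ℂ) ^ 2 * (ν : ℂ) * (r + 2 * (ν : ℂ) - 2)) •
        ((S.ρ ⟨0, by omega⟩ ⟨0, by omega⟩ (-m) (-m) ^ (ν - 1)) one) := by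
  set i₀ : Fin d := ⟨0, by omega⟩
  have hHv := hvac i₀ i₀ (-m) m (Or.inr hm.le)
  have hAv := hvac i₀ i₀ m m (Or.inl hm.le)
  cases ν with
  | zero => simp [hAv]
  | succ n =>
    rw [apply_pow_succ_apply_of_mul_sub_mul_eq (S.comm_pos_pos_neg_neg i₀ hm)
      (S.comm_neg_pos_neg_neg i₀ hm.ne') hHv hAv n, Nat.add_sub_cancel, Nat.cast_choose_two]
    congr 1
    push_cast
    ring
end

section
/- Define weight operators h_{k,l} := −(1/l)·v^{kk}(l,−l) for 1 ≤ k ≤ d and l < 0. Then in L_r, [h_{k,l}, v^{ij}(m,n)]_r = (δ_{(k,l),(i,m)} + δ_{(k,l),(j,n)} − δ_{(k,−l),(i,m)} − δ_{(k,−l),(j,n)})·v^{ij}(m,n) for all 1 ≤ i,j ≤ d and m,n ∈ ℤ. -/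
/-!
Since `l < 0`, `v^{kk}(l,−l)` is already a basis element, and in the Wick formula for
`[v^k(l)v^k(−l), v^{ij}(m,n)]` only the contractions of `v^k(∓l)` with `v^i(m)` or `v^j(n)`
survive; each returns `∓l` times `v^{ij}(m,n)` itself, and the factor `−1/l` turns these into
the four Kronecker deltas. Rewriting `v^{ij}(m,n)` in normal order may add a scalar, but only
for `v^{ii}(m,−m)`, whose weight is zero.
-/

variable {d : ℕ}

def NormalOrdered (i j : Fin d) (m n : ℤ) : Prop :=
  i < j ∨ (i = j ∧ m ≤ n)

theorem normalOrdered_or_normalOrdered_swap (i j : Fin d) (m n : ℤ) :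
    NormalOrdered i j m n ∨ NormalOrdered j i n m := by
  rcases lt_trichotomy i j with h | rfl | h
  · exact Or.inl (Or.inl h)
  · rcases le_total m n with h | h
    · exact Or.inl (Or.inr ⟨rfl, h⟩)
    · exact Or.inr (Or.inr ⟨rfl, h⟩)
  · exact Or.inr (Or.inl h)

theorem nrm_of_normalOrdered {i j : Fin d} {m n : ℤ} (h : NormalOrdered i j m n) :
    nrm i j m n = ((Finsupp.single (i, j, m, n) 1, 0) : LSp d) := by
  rcases h with h | ⟨rfl, h⟩
  · rw [nrm, if_neg (by simp [h.ne]), if_neg (by simp [h.asymm])]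
  · rw [nrm, if_neg (by simp; omega), if_neg (by simp)]

theorem nrm_swap_of_normalOrdered {i j : Fin d} {m n : ℤ} (h : NormalOrdered i j m n) :
    nrm j i n m = ((Finsupp.single (i, j, m, n) 1,
      if i = j ∧ m + n = 0 ∧ m < n then (n : ℂ) else 0) : LSp d) := by
  rcases h with h | ⟨rfl, h⟩
  · rw [nrm, if_neg (by simp [h.ne']), if_pos h, if_neg (by simp [h.ne])]
  · rcases h.lt_or_eq with h | rfl
    · rw [nrm, if_pos ⟨rfl, h⟩]
      simp [h, add_comm m n]
    · rw [nrm, if_neg (by simp), if_neg (by simp), if_neg (by simp)]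

theorem brk_single_single (r c c' x y : ℂ) (a b : Fin d × Fin d × ℤ × ℤ) :
    brk r ((Finsupp.single a c, x) : LSp d) (Finsupp.single b c', y) = (c * c') • wick r a b := by
  rw [brk, Finsupp.sum_single_index (by simp), Finsupp.sum_single_index (by simp)]

theorem kapC_smul_eq_ite_smul {j l : Fin d} {n t : ℤ} {x y : LSp d} {c : ℂ}
    (P : Prop) [Decidable P] (hP : j = l ∧ n + t = 0 ↔ P) (hx : P → (n : ℂ) • x = c • y) :
    kapC j l n t • x = (if P then c else 0) • y := by
  by_cases h : P
  · rw [kapC, if_pos (hP.2 h), if_pos h, hx h]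
  · rw [kapC, if_neg (mt hP.1 h), if_neg h, zero_smul, zero_smul]

def weight (k : Fin d) (l : ℤ) (i j : Fin d) (m n : ℤ) : ℂ :=
  (if k = i ∧ l = m then 1 else 0) + (if k = j ∧ l = n then 1 else 0)
    - (if k = i ∧ -l = m then 1 else 0) - (if k = j ∧ -l = n then 1 else 0)

theorem weight_swap (k : Fin d) (l : ℤ) (i j : Fin d) (m n : ℤ) :
    weight k l j i n m = weight k l i j m n := by
  unfold weight
  ring

theorem weight_neg_right (k : Fin d) (l : ℤ) (i : Fin d) (m : ℤ) :
    weight k l i i m (-m) = 0 := by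
  unfold weight
  by_cases hk : k = i
  · simp only [hk, true_and]
    split_ifs <;> first | (exfalso; omega) | ring
  · simp [hk]

theorem wick_weightOp {k i j : Fin d} {l m n : ℤ} (r : ℂ) (hl : l < 0)
    (h : NormalOrdered i j m n) :
    wick r (k, k, l, -l) (i, j, m, n)
      = (-(l : ℂ) * weight k l i j m n) • ((Finsupp.single (i, j, m, n) 1, 0) : LSp d) := by
  set e : LSp d := (Finsupp.single (i, j, m, n) 1, 0)
  have hbd : kapC k j (-l) n • nrm k i l m = (if k = j ∧ l = n then -(l : ℂ) else 0) • e :=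
    kapC_smul_eq_ite_smul _ (by omega) fun ⟨hk, hn⟩ => by
      subst hk hn
      rw [nrm_swap_of_normalOrdered h, if_neg (by omega)]
      push_cast
      rfl
  have hbc : kapC k i (-l) m • nrm k j l n = (if k = i ∧ l = m then -(l : ℂ) else 0) • e :=
    kapC_smul_eq_ite_smul _ (by omega) fun ⟨hk, hm⟩ => by
      subst hk hm
      rw [nrm_of_normalOrdered h]
      push_cast
      rfl
  have had : kapC k j l n • nrm i k m (-l) = (if k = j ∧ -l = n then (l : ℂ) else 0) • e :=
    kapC_smul_eq_ite_smul _ (by omega) fun ⟨hk, hn⟩ => by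
      subst hk hn
      rw [nrm_of_normalOrdered h]
  have hac : kapC k i l m • nrm j k n (-l) = (if k = i ∧ -l = m then (l : ℂ) else 0) • e :=
    kapC_smul_eq_ite_smul _ (by omega) fun ⟨hk, hm⟩ => by
      subst hk hm
      rw [nrm_swap_of_normalOrdered h, if_neg (by omega)]
  simp only [wick]
  have hcollect : ∀ a b c c' : ℂ, a • e + b • e + c • e + c' • e = (a + b + c + c') • e :=
    fun _ _ _ _ => by module
  rw [hbd, hbc, had, hac, hcollect]
  simp only [e, Prod.smul_mk, smul_zero, mul_zero, weight]
  congr 2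
  split_ifs <;> ring

theorem brk_weightOp_single {k i j : Fin d} {l m n : ℤ} (r s : ℂ) (hl : l < 0)
    (h : NormalOrdered i j m n) :
    brk r ((-(1 / (l : ℂ))) • nrm k k l (-l)) ((Finsupp.single (i, j, m, n) 1, s) : LSp d)
      = weight k l i j m n • ((Finsupp.single (i, j, m, n) 1, 0) : LSp d) := by
  have hl0 : (l : ℂ) ≠ 0 := Int.cast_ne_zero.2 hl.ne
  rw [nrm_of_normalOrdered (Or.inr ⟨rfl, by omega⟩), Prod.smul_mk, Finsupp.smul_single',
    smul_zero, brk_single_single, wick_weightOp r hl h, smul_smul]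
  congr 1
  field_simp

/-- with the weight operators `h_{k,l} := −(1/l)·v^{kk}(l,−l)` for `l < 0`,
one has, in `L_r`,
`[h_{k,l}, v^{ij}(m,n)]_r = (δ_{(k,l),(i,m)} + δ_{(k,l),(j,n)} − δ_{(k,−l),(i,m)} − δ_{(k,−l),(j,n)})·v^{ij}(m,n)`. -/
theorem stmt_14 (d : ℕ) (r : ℂ) (k i j : Fin d) (l m n : ℤ) (hl : l < 0) :
    brk r ((-(1 / (l : ℂ))) • nrm k k l (-l)) (nrm i j m n)
      = (((if k = i ∧ l = m then 1 else 0) + (if k = j ∧ l = n then 1 else 0)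
          - (if k = i ∧ -l = m then 1 else 0) - (if k = j ∧ -l = n then 1 else 0) : ℂ))
        • nrm i j m n := by
  change _ = weight k l i j m n • _
  rcases normalOrdered_or_normalOrdered_swap i j m n with h | h
  · rw [nrm_of_normalOrdered h, brk_weightOp_single r 0 hl h]
  · rw [nrm_swap_of_normalOrdered h, brk_weightOp_single r _ hl h, weight_swap]
    split_ifs with hs
    · obtain ⟨rfl, hnm, -⟩ := hs
      rw [show m = -n by omega, weight_swap, weight_neg_right, zero_smul, zero_smul]
    · rfl
end

section
/- In L_r, for 2 ≤ i ≤ d, m < 0, and N < 0, one has [v^{1i}(−N, m), v^{1i}(N, −m)]_r = (−N)·v^{ii}(m, −m) + m·v^{11}(N, −N). -/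
/-- in `L_r`, for `2 ≤ i ≤ d`, `m < 0` and `N < 0`, one has
`[v^{1i}(−N,m), v^{1i}(N,−m)]_r = (−N)·v^{ii}(m,−m) + m·v^{11}(N,−N)`
(here the index `⟨0, _⟩ : Fin d` plays the role of `1`, and `i ≠ 1`). -/
theorem stmt_15 (d : ℕ) (hd : 2 ≤ d) (r : ℂ) (i : Fin d)
    (hi : i ≠ (⟨0, by omega⟩ : Fin d)) (m N : ℤ) (hm : m < 0) (hN : N < 0) :
    brk r (nrm (⟨0, by omega⟩ : Fin d) i (-N) m) (nrm (⟨0, by omega⟩ : Fin d) i N (-m))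
      = ((-N : ℤ) : ℂ) • nrm i i m (-m)
        + (m : ℂ) • nrm (⟨0, by omega⟩ : Fin d) (⟨0, by omega⟩ : Fin d) N (-N) := by
  set z : Fin d := ⟨0, by omega⟩ with hz
  have hzi : ¬ (z = i) := fun h => hi h.symm
  have hvi : (i : ℕ) ≠ 0 := fun h => hi (Fin.ext h)
  have hiz : z < i := by rw [Fin.lt_def]; simpa [hz] using Nat.pos_of_ne_zero hvi
  have hniz : ¬ (i < z) := not_lt.2 (le_of_lt hiz)
  have h1 : nrm z i (-N) m = (Finsupp.single (z, i, -N, m) 1, 0) := by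
    rw [nrm]; simp [hzi, hniz]
  have h2 : nrm z i N (-m) = (Finsupp.single (z, i, N, -m) 1, 0) := by
    rw [nrm]; simp [hzi, hniz]
  rw [h1, h2, brk]
  rw [Finsupp.sum_single_index (by simp), Finsupp.sum_single_index (by simp)]
  rw [wick]
  have knn : kapC (d := d) i i m (-m) = (m : ℂ) := by simp [kapC]
  have k2 : kapC (d := d) i z m N = 0 := by simp only [kapC]; rw [if_neg]; exact fun h => hi h.1
  have k3 : kapC (d := d) z i (-N) (-m) = 0 := by simp [kapC, hzi]
  have k4 : kapC (d := d) z z (-N) N = ((-N : ℤ) : ℂ) := by simp [kapC]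
  have n1 : nrm z z (-N) N = (Finsupp.single (z, z, N, -N) 1, ((-N : ℤ) : ℂ)) := by
    rw [nrm]; simp [show N < -N by omega]
  have n4 : nrm i i (-m) m = (Finsupp.single (i, i, m, -m) 1, ((-m : ℤ) : ℂ)) := by
    rw [nrm]; simp [show m < -m by omega]
  have rhs1 : nrm i i m (-m) = (Finsupp.single (i, i, m, -m) 1, 0) := by
    rw [nrm]; simp [show ¬ (-m < m) by omega]
  have rhs2 : nrm z z N (-N) = (Finsupp.single (z, z, N, -N) 1, 0) := by
    rw [nrm]; simp [show ¬ (-N < N) by omega]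
  rw [knn, k2, k3, k4, n1, n4, rhs1, rhs2]
  simp only [Prod.smul_mk, smul_zero, zero_smul, Prod.mk_add_mk, add_zero, zero_add,
    Prod.smul_mk, smul_eq_mul]
  ext : 1
  · simp [Finsupp.single_add]; abel
  · push_cast; ring
end

section
/- Let p ≥ 1 and let V_p = (v(−s,−t))_{1≤s,t≤p} be the p×p matrix with entries in the commutative subalgebra generated by {v(−s,−t) : s,t > 0} (where v(a,b) = v^{11}(a,b), and all v(−s,−t) with s,t > 0 pairwise commute). Then for integers 1 ≤ m ≤ p and n ≥ 0 with m ≠ n, the commutator [v(−m,n), det V_p] = 0 in U(L_r). -/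
/-- The determinant of the matrix `(w(−f(q), −f(q')))_{q,q'}` with (pairwise commuting)
entries in a possibly noncommutative ring, expanded as
`Σ_σ sgn(σ) Π_q w(−f(q), −f(σ(q)))`. -/
noncomputable def detOn {A : Type*} [Ring A] {k : ℕ} (w : ℤ → ℤ → A) (f : Fin k → ℤ) : A :=
  ∑ σ : Equiv.Perm (Fin k),
    ((Equiv.Perm.sign σ : ℤˣ) : ℤ) • (List.ofFn fun q => w (-(f q)) (-(f (σ q)))).prod

theorem Derivation.leibniz_prod {R A M : Type*} [CommSemiring R] [CommSemiring A]
    [AddCommMonoid M] [Algebra R A] [Module A M] [Module R M] (D : Derivation R A M)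
    {ι : Type*} [DecidableEq ι] (s : Finset ι) (f : ι → A) :
    D (∏ i ∈ s, f i) = ∑ i ∈ s, (∏ j ∈ s.erase i, f j) • D (f i) := by
  induction s using Finset.induction_on with
  | empty => simp
  | @insert a s ha ih =>
    rw [Finset.prod_insert ha, D.leibniz, Finset.sum_insert ha, Finset.erase_insert ha, ih,
      Finset.smul_sum, add_comm]
    congr 1
    refine Finset.sum_congr rfl fun i hi => ?_
    rw [Finset.erase_insert_of_ne (ne_of_mem_of_not_mem hi ha).symm,
      Finset.prod_insert fun h => ha (Finset.mem_of_mem_erase h), mul_smul]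

namespace Derivation

variable {S R n : Type*} [CommSemiring S] [CommRing R] [Algebra S R] [Fintype n] [DecidableEq n]
  (D : Derivation S R R) (M : Matrix n n R)

open Matrix

theorem map_det_eq_sum_det_updateCol :
    D M.det = ∑ q, (M.updateCol q fun j => D (M j q)).det := by
  simp only [det_apply, map_sum, Units.smul_def, map_zsmul, D.leibniz_prod, Finset.smul_sum]
  rw [Finset.sum_comm]
  refine Finset.sum_congr rfl fun q _ => Finset.sum_congr rfl fun σ _ => ?_
  rw [← Finset.mul_prod_erase _ _ (Finset.mem_univ q), updateCol_self, smul_eq_mul, mul_comm]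
  congr 2
  exact Finset.prod_congr rfl fun j hj => (updateCol_ne (Finset.ne_of_mem_erase hj)).symm

theorem map_det : D M.det = (adjugate M * M.map D).trace := by
  simp only [map_det_eq_sum_det_updateCol, ← cramer_apply, cramer_eq_adjugate_mulVec, trace,
    diag, mul_apply, mulVec, dotProduct, map_apply]

theorem map_det_of_map_eq_mul_add_mul {N N' : Matrix n n R} (h : M.map D = N * M + M * N') :
    D M.det = (N.trace + N'.trace) * M.det := by
  rw [map_det, h, Matrix.mul_add, trace_add, ← Matrix.mul_assoc, trace_mul_comm, ← Matrix.mul_assoc,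
    mul_adjugate, ← Matrix.mul_assoc, adjugate_mul]
  simp only [smul_mul_assoc, one_mul, trace_smul, smul_eq_mul]
  ring

theorem map_det_of_map_eq_add {u : n → R} {a : n}
    (h : ∀ i j, D (M i j) = u i * M a j + u j * M i a) : D M.det = 2 * u a * M.det := by
  have key : M.map D = vecMulVec u (Pi.single a 1) * M + M * (vecMulVec u (Pi.single a 1))ᵀ := by
    ext i j
    simp [h, mul_apply, vecMulVec_apply, Pi.single_apply, mul_comm]
  rw [map_det_of_map_eq_mul_add_mul D M key, trace_transpose, trace_vecMulVec]
  simp only [dotProduct_single, mul_one]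
  ring

end Derivation

open scoped IsMulCommutative

theorem Algebra.commutator_mem_adjoin {R A : Type*} [CommRing R] [Ring A] [Algebra R A]
    {s : Set A} {X : A} (hX : ∀ g ∈ s, X * g - g * X ∈ adjoin R s) {y : A}
    (hy : y ∈ adjoin R s) : X * y - y * X ∈ adjoin R s := by
  induction hy using Algebra.adjoin_induction with
  | mem g hg => exact hX g hg
  | algebraMap c => simp [Algebra.commutes]
  | add a b _ _ ha hb =>
    convert add_mem ha hb using 1
    noncomm_ring
  | mul a b ha hb ha' hb' =>
    convert add_mem (mul_mem ha' hb) (mul_mem ha hb') using 1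
    noncomm_ring

namespace Subalgebra

variable {R A : Type*} [CommRing R] [Ring A] [Algebra R A] (B : Subalgebra R A)
  [IsMulCommutative B] (X : A) (hX : ∀ b ∈ B, X * b - b * X ∈ B)

def adDerivation : Derivation R B B where
  toFun b := ⟨X * b - b * X, hX b b.2⟩
  map_add' a b := Subtype.ext <| by simp only [AddMemClass.coe_add]; noncomm_ring
  map_smul' c b := Subtype.ext <| by
    simp only [SetLike.val_smul, RingHom.id_apply, mul_smul_comm, smul_mul_assoc, smul_sub]
  map_one_eq_zero' := Subtype.ext (by simp)
  leibniz' a b := by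
    have hcomm : b • (⟨X * a - a * X, hX a a.2⟩ : B) = ⟨X * a - a * X, hX a a.2⟩ * b :=
      mul_comm' _ _
    refine Subtype.ext ?_
    simp only [LinearMap.coe_mk, AddHom.coe_mk, hcomm, smul_eq_mul, AddMemClass.coe_add,
      MulMemClass.coe_mul]
    noncomm_ring

@[simp]
theorem coe_adDerivation_apply (b : B) : (B.adDerivation X hX b : A) = X * b - b * X := rfl

end Subalgebra

theorem detOn_eq_map_det {A R : Type*} [Ring A] [CommRing R] (φ : R →+* A) {k : ℕ}
    (w : ℤ → ℤ → A) (f : Fin k → ℤ) (M : Matrix (Fin k) (Fin k) R)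
    (hM : ∀ i j, φ (M i j) = w (-(f i)) (-(f j))) : detOn w f = φ M.det := by
  rw [← Matrix.det_transpose, Matrix.det_apply, map_sum, detOn]
  refine Finset.sum_congr rfl fun σ _ => ?_
  rw [Units.smul_def, map_zsmul, ← List.prod_ofFn, map_list_prod, List.map_ofFn]
  simp only [Function.comp_def, Matrix.transpose_apply, hM]

theorem kapC_eq_zero_of_neg {d : ℕ} (j l : Fin d) {a b : ℤ} (ha : a < 0) (hb : b < 0) :
    kapC j l a b = 0 :=
  if_neg fun h => by omega

theorem sigC_eq_zero_of_neg {d : ℕ} (i k : Fin d) {a : ℤ} (b : ℤ) (ha : a < 0) :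
    sigC i k a b = 0 :=
  if_neg fun h => by omega

namespace LrAlg

variable {d : ℕ} {r : ℂ} {A : Type*} [Ring A] [Algebra ℂ A] (S : LrAlg d r A)

theorem commute_ρ_of_neg (i j k l : Fin d) {a b c e : ℤ} (ha : a < 0) (hb : b < 0) (hc : c < 0)
    (he : e < 0) : Commute (S.ρ i j a b) (S.ρ k l c e) := by
  refine sub_eq_zero.mp ((S.comm i j k l a b c e).trans ?_)
  simp [kapC_eq_zero_of_neg, *]

theorem commutator_ρ_neg_pos_neg_neg (i : Fin d) {m s t : ℤ} (n : ℤ) (hm : 0 < m) (hs : 0 < s)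
    (ht : 0 < t) :
    S.ρ i i (-m) n * S.ρ i i (-s) (-t) - S.ρ i i (-s) (-t) * S.ρ i i (-m) n
      = (if n = s then (n : ℂ) else 0) • S.ρ i i (-m) (-t)
        + (if n = t then (n : ℂ) else 0) • S.ρ i i (-s) (-m) := by
  have hmt : -m ≠ t := by omega
  have hms : -m ≠ s := by omega
  rw [S.comm, S.symm i i (-m) (-s) (Or.inr (by omega))]
  simp [kapC, sigC_eq_zero_of_neg, hm, hmt, hms, add_neg_eq_zero, add_comm]

theorem commute_ρ_neg_pos_detOn (i : Fin d) (p : ℕ) {m : ℤ} (n : ℤ) (hm : 0 < m)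
    (hmp : m ≤ p) (hmn : m ≠ n) :
    Commute (S.ρ i i (-m) n) (detOn (S.ρ i i) fun q : Fin p => (q : ℤ) + 1) := by
  set X := S.ρ i i (-m) n
  set B := Algebra.adjoin ℂ {x | ∃ s t : ℤ, 0 < s ∧ 0 < t ∧ S.ρ i i (-s) (-t) = x}
  have hgen (s t : ℤ) (hs : 0 < s) (ht : 0 < t) : S.ρ i i (-s) (-t) ∈ B :=
    Algebra.subset_adjoin ⟨s, t, hs, ht, rfl⟩
  have : IsMulCommutative B := Algebra.isMulCommutative_adjoin ℂ <| by
    rintro _ ⟨s, t, hs, ht, rfl⟩ _ ⟨s', t', hs', ht', rfl⟩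
    exact S.commute_ρ_of_neg i i i i (by omega) (by omega) (by omega) (by omega)
  have hX : ∀ b ∈ B, X * b - b * X ∈ B := fun b => Algebra.commutator_mem_adjoin <| by
    rintro _ ⟨s, t, hs, ht, rfl⟩
    rw [S.commutator_ρ_neg_pos_neg_neg i n hm hs ht]
    exact add_mem (B.smul_mem (hgen m t hm ht) _) (B.smul_mem (hgen s m hs hm) _)
  let V : Matrix (Fin p) (Fin p) B := fun s t =>
    ⟨S.ρ i i (-(s + 1)) (-(t + 1)), hgen _ _ (by omega) (by omega)⟩
  let u : Fin p → B := fun s => algebraMap ℂ B (if n = s + 1 then n else 0)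
  obtain ⟨a, ha⟩ : ∃ a : Fin p, (a : ℤ) + 1 = m := ⟨⟨(m - 1).toNat, by omega⟩, by simp; omega⟩
  have hV (s t : Fin p) : B.adDerivation X hX (V s t) = u s * V a t + u t * V s a := by
    apply Subtype.ext
    rw [Subalgebra.coe_adDerivation_apply,
      S.commutator_ρ_neg_pos_neg_neg i n hm (by omega) (by omega), ← ha]
    simp [V, u, Algebra.smul_def]
  have hua : u a = 0 := by simp [u, ha, hmn.symm]
  have hdet : B.adDerivation X hX V.det = 0 := by
    rw [(B.adDerivation X hX).map_det_of_map_eq_add V hV, hua, mul_zero, zero_mul]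
  rw [detOn_eq_map_det B.val.toRingHom _ _ V fun _ _ => rfl]
  exact sub_eq_zero.mp (congrArg Subtype.val hdet)

end LrAlg

/-- let `V_p = (v(−s,−t))_{1≤s,t≤p}` with `v(a,b) = v^{11}(a,b)`.  For
integers `1 ≤ m ≤ p` and `n ≥ 0` with `m ≠ n`, the commutator `[v(−m,n), det V_p]`
vanishes in `U(L_r)` (formalized: in every associative `ℂ`-algebra `A` carrying a
representation of `L_r`, which is equivalent to the statement in `U(L_r)` by
universality). -/
theorem stmt_16 (d : ℕ) (hd : 2 ≤ d) (r : ℂ) (A : Type*) [Ring A] [Algebra ℂ A]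
    (S : LrAlg d r A) (p : ℕ) (m n : ℤ)
    (h1 : 1 ≤ m) (h2 : m ≤ (p : ℤ)) (hmn : m ≠ n) :
    S.ρ ⟨0, by omega⟩ ⟨0, by omega⟩ (-m) n
        * detOn (fun a b => S.ρ (⟨0, by omega⟩ : Fin d) ⟨0, by omega⟩ a b)
            (fun q : Fin p => (q : ℤ) + 1)
      - detOn (fun a b => S.ρ (⟨0, by omega⟩ : Fin d) ⟨0, by omega⟩ a b)
            (fun q : Fin p => (q : ℤ) + 1)
          * S.ρ ⟨0, by omega⟩ ⟨0, by omega⟩ (-m) n = 0 :=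
  sub_eq_zero.mpr (S.commute_ρ_neg_pos_detOn _ p n h1 h2 hmn).eq
end

section
/- Suppose ν_1, ..., ν_p are complex numbers satisfying, for each 1 ≤ s ≤ p, the equation ν_s(r + 2ν_s − 2) − (s−1)ν_s − ν_{s+1} − ... − ν_p = 0, together with r + 2ν_p − 1 − p = 0. If all ν_q are positive integers, then ν_1 = ν_2 = ... = ν_p. -/
/-- suppose `ν_1, …, ν_p ∈ ℂ` satisfy, for each `1 ≤ s ≤ p`,
`ν_s(r + 2ν_s − 2) − (s−1)ν_s − ν_{s+1} − ⋯ − ν_p = 0`, together with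
`r + 2ν_p − 1 − p = 0`.  If all `ν_q` are positive integers, then
`ν_1 = ν_2 = ⋯ = ν_p`.  (Indices are `0`-based: `ν ⟨s⟩` stands for `ν_{s+1}`.) -/
theorem stmt_19 (p : ℕ) (hp : 1 ≤ p) (r : ℂ) (ν : Fin p → ℂ)
    (hint : ∀ q, ∃ k : ℕ, 0 < k ∧ ν q = (k : ℂ))
    (heq : ∀ s : Fin p,
      ν s * (r + 2 * ν s - 2) - ((s : ℕ) : ℂ) * ν s
        - ∑ t ∈ Finset.univ.filter (fun t => s < t), ν t = 0)
    (hlast : r + 2 * ν ⟨p - 1, by omega⟩ - 1 - (p : ℂ) = 0) :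
    ∀ q q' : Fin p, ν q = ν q' := by
  have hr : r = 1 + (p : ℂ) - 2 * ν ⟨p - 1, by omega⟩ := by linear_combination hlast
  have step : ∀ s : ℕ, ∀ hs : s + 1 < p,
      ν ⟨s + 1, hs⟩ = ν ⟨p - 1, by omega⟩ → ν ⟨s, by omega⟩ = ν ⟨s + 1, hs⟩ := by
    intro s hs hind
    have h1 := heq ⟨s, by omega⟩
    have h2 := heq ⟨s + 1, hs⟩
    have hsum : (Finset.univ.filter (fun t => (⟨s, by omega⟩ : Fin p) < t))
        = insert (⟨s + 1, hs⟩ : Fin p)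
            (Finset.univ.filter (fun t => (⟨s + 1, hs⟩ : Fin p) < t)) := by
      ext t
      simp only [Finset.mem_insert, Finset.mem_filter, Finset.mem_univ, true_and,
        Fin.lt_def, Fin.ext_iff]
      omega
    have hnot : (⟨s + 1, hs⟩ : Fin p) ∉
        Finset.univ.filter (fun t => (⟨s + 1, hs⟩ : Fin p) < t) := by simp
    rw [hsum, Finset.sum_insert hnot] at h1
    have key : (ν ⟨s, by omega⟩ - ν ⟨s + 1, hs⟩)
        * (r + 2 * ν ⟨s, by omega⟩ + 2 * ν ⟨s + 1, hs⟩ - 2 - (s : ℂ)) = 0 := by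
      push_cast at h1 h2 ⊢
      linear_combination h1 - h2
    rcases mul_eq_zero.mp key with h | h
    · exact sub_eq_zero.mp h
    · exfalso
      obtain ⟨k, hk, hνs⟩ := hint ⟨s, by omega⟩
      obtain ⟨m, hm⟩ : ∃ m, p = s + 1 + m := ⟨p - s - 1, by omega⟩
      have hp_cast : (p : ℂ) = (s : ℂ) + 1 + (m : ℂ) := by
        rw [hm]; push_cast; ring
      have hz : ((2 * k + m : ℕ) : ℂ) = 0 := by
        push_cast
        linear_combination h - hr - 2 * hind - 2 * hνs - hp_cast
      have : 2 * k + m = 0 := by exact_mod_cast hz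
      omega
  have main : ∀ j : ℕ, ∀ q : Fin p, p - 1 - q.val ≤ j → ν q = ν ⟨p - 1, by omega⟩ := by
    intro j
    induction j with
    | zero =>
      intro q hq
      have hq' : q.val = p - 1 := by have := q.isLt; omega
      congr 1
      exact Fin.ext hq'
    | succ j ih =>
      intro q hq
      by_cases h' : p - 1 - q.val ≤ j
      · exact ih q h'
      · have hq1 : q.val + 1 < p := by have := q.isLt; omega
        have h2 := ih ⟨q.val + 1, hq1⟩ (by simp; omega)
        have h3 := step q.val hq1 h2
        have hqe : (⟨q.val, by omega⟩ : Fin p) = q := Fin.ext rfl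
        rw [hqe] at h3
        rw [h3, h2]
  intro q q'
  rw [main (p - 1) q (by omega), main (p - 1) q' (by omega)]
end
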